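/- arXiv:1505.06837 — 4 statements merged into one kernel-verified Lean document; each statement's English description precedes it below -/
import Mathlib

section
/- Let R be a commutative ring, let m ≥ n ≥ 1 be integers, let Y ∈ R, and let A be a 2m × 2n matrix over R. Let J_m be the 2m × 2m block-diagonal matrix with m diagonal blocks equal to [[0,1],[-1,0]]. Then the determinant of the 2(m+n) × 2(m+n) block matrix [[Y·J_m, A], [-Aᵀ, 0]] equals Y^{2(m-n)} · det(Aᵀ · J_m · A). -/
open Matrix

/-- The structure matrix `J_m` of the standard non-degenerate symplectic form on `R^{2m}`:
the `2m × 2m` matrix with entries `a_{2i-1,2i} = 1`, `a_{2i,2i-1} = -1` (1-indexed) for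
`1 ≤ i ≤ m`, and all other entries zero.  In 0-indexed terms, `J i j = 1` if `i` is even and
`j = i + 1`, `J i j = -1` if `i` is odd and `i = j + 1`, and `J i j = 0` otherwise. -/
def sympJ (R : Type*) [CommRing R] (m : ℕ) : Matrix (Fin (2 * m)) (Fin (2 * m)) R :=
  Matrix.of fun i j =>
    if i.val % 2 = 0 ∧ j.val = i.val + 1 then 1
    else if i.val % 2 = 1 ∧ i.val = j.val + 1 then -1
    else 0

/-!
Right-multiplying `[[Y • J, A], [-Aᵀ, 0]]` by `[[Y • 1, J * A], [0, Y • 1]]` makes it block lower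
triangular with diagonal blocks `Y² • J` and `-(Aᵀ * J * A)`, because `J * J = -1`. Since `J_m` is
block diagonal with blocks `J_1`, it also has determinant `1`, so the identity holds after
multiplication by `Y ^ (2m + 2n)`. This factor cancels when `Y` is the indeterminate of `R[X]`,
and evaluation at `Y` gives the general case.
-/

open Polynomial

section Symplectic

variable (R : Type*) [CommRing R]

-- `i ↦ (i % 2, i / 2)`: position inside the `2 × 2` block, and index of the block.
def finTwoMulEquiv (m : ℕ) : Fin (2 * m) ≃ Fin 2 × Fin m :=
  (finCongr (Nat.mul_comm 2 m)).trans (finProdFinEquiv.symm.trans (Equiv.prodComm _ _))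

lemma sympJ_eq_submatrix_blockDiagonal (m : ℕ) :
    sympJ R m = (blockDiagonal fun _ : Fin m => sympJ R 1).submatrix
      (finTwoMulEquiv m) (finTwoMulEquiv m) := by
  ext i j
  simp only [sympJ, of_apply, submatrix_apply, blockDiagonal_apply, finTwoMulEquiv,
    Equiv.trans_apply, Equiv.prodComm_apply, Prod.fst_swap, Prod.snd_swap,
    finProdFinEquiv_symm_apply, Fin.ext_iff, Fin.coe_divNat, Fin.coe_modNat, finCongr_apply,
    Fin.val_cast, Nat.mul_one]
  split_ifs <;> first | rfl | omega

lemma sympJ_one : sympJ R 1 = !![0, 1; -1, 0] := by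
  ext i j
  fin_cases i <;> fin_cases j <;> simp [sympJ]

lemma sympJ_mul_self (m : ℕ) : sympJ R m * sympJ R m = -1 := by
  have hJ₁ : sympJ R 1 * sympJ R 1 = -1 := by
    rw [sympJ_one]
    ext i j
    fin_cases i <;> fin_cases j <;> simp
  rw [sympJ_eq_submatrix_blockDiagonal, submatrix_mul_equiv, ← blockDiagonal_mul, hJ₁]
  change (blockDiagonal (-1)).submatrix _ _ = _
  rw [blockDiagonal_neg, blockDiagonal_one]
  exact congrArg Neg.neg (submatrix_one_equiv _)

lemma det_sympJ (m : ℕ) : (sympJ R m).det = 1 := by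
  rw [sympJ_eq_submatrix_blockDiagonal, det_submatrix_equiv_self, det_blockDiagonal, sympJ_one,
    det_fin_two_of]
  simp

end Symplectic

section BlockDeterminant

variable {R : Type*} [CommRing R] {ι κ : Type*} [Fintype ι] [Fintype κ] [DecidableEq ι]
  [DecidableEq κ]

lemma fromBlocks_smul_mul_fromBlocks {J : Matrix ι ι R} (hJ : J * J = -1) (Y : R)
    (A : Matrix ι κ R) :
    fromBlocks (Y • J) A (-Aᵀ) 0 * fromBlocks (Y • 1) (J * A) 0 (Y • 1) =
      fromBlocks ((Y * Y) • J) 0 (-(Y • Aᵀ)) (-(Aᵀ * J * A)) := by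
  rw [fromBlocks_multiply]
  congr 1
  · rw [Matrix.mul_zero, add_zero, smul_mul_smul_comm, mul_one]
  · simp [Matrix.mul_smul, ← Matrix.mul_assoc, hJ]
  · simp
  · simp [Matrix.mul_assoc]

lemma det_fromBlocks_smul_mul_pow {J : Matrix ι ι R} (hJ : J * J = -1) (Y : R)
    (A : Matrix ι κ R) :
    (fromBlocks (Y • J) A (-Aᵀ) 0).det * Y ^ (Fintype.card ι + Fintype.card κ) =
      Y ^ (2 * Fintype.card ι) * J.det * (-(Aᵀ * J * A)).det := by
  have hN : (fromBlocks (Y • 1) (J * A) 0 (Y • (1 : Matrix κ κ R))).det =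
      Y ^ (Fintype.card ι + Fintype.card κ) := by
    rw [det_fromBlocks_zero₂₁, det_smul, det_smul, det_one, det_one, pow_add]
    ring
  rw [← hN, ← det_mul, fromBlocks_smul_mul_fromBlocks hJ, det_fromBlocks_zero₁₂, det_smul,
    ← sq, ← pow_mul, mul_comm 2]

end BlockDeterminant

section Specialization

variable {R S : Type*} [CommRing R] [CommRing S]

lemma sympJ_map (f : R →+* S) (m : ℕ) : (sympJ R m).map f = sympJ S m := by
  ext i j
  simp only [map_apply, sympJ, of_apply]
  split_ifs <;> simp

lemma det_fromBlocks_smul_sympJ_of_isRegular {m n : ℕ} (hmn : n ≤ m) {Y : R}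
    (hY : IsRegular Y) (A : Matrix (Fin (2 * m)) (Fin (2 * n)) R) :
    (fromBlocks (Y • sympJ R m) A (-Aᵀ) 0).det =
      Y ^ (2 * (m - n)) * (Aᵀ * sympJ R m * A).det := by
  apply (hY.pow (2 * m + 2 * n)).right
  have key := det_fromBlocks_smul_mul_pow (sympJ_mul_self R m) Y A
  rw [det_sympJ, det_neg, Fintype.card_fin, Fintype.card_fin, pow_mul (-1 : R), neg_one_sq,
    one_pow] at key
  dsimp only
  rw [key, show 2 * (2 * m) = 2 * (m - n) + (2 * m + 2 * n) by omega, pow_add]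
  ring

lemma map_det_fromBlocks_smul_sympJ (f : R →+* S) {m n : ℕ} (Y : R)
    (A : Matrix (Fin (2 * m)) (Fin (2 * n)) R) :
    f (fromBlocks (Y • sympJ R m) A (-Aᵀ) 0).det =
      (fromBlocks (f Y • sympJ S m) (A.map f) (-(A.map f)ᵀ) 0).det := by
  rw [RingHom.map_det, RingHom.mapMatrix_apply, fromBlocks_map, Matrix.map_smul' f Y _ (map_mul f),
    sympJ_map, Matrix.map_neg _ (map_neg f), transpose_map, Matrix.map_zero _ (map_zero f)]

lemma map_pow_mul_det_transpose_mul_sympJ_mul (f : R →+* S) {m n : ℕ} (Y : R) (k : ℕ)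
    (A : Matrix (Fin (2 * m)) (Fin (2 * n)) R) :
    f (Y ^ k * (Aᵀ * sympJ R m * A).det) =
      f Y ^ k * ((A.map f)ᵀ * sympJ S m * A.map f).det := by
  rw [map_mul, map_pow, RingHom.map_det, RingHom.mapMatrix_apply, Matrix.map_mul, Matrix.map_mul,
    sympJ_map, transpose_map]

end Specialization

theorem det_blocks_symplectic_general {R : Type*} [CommRing R] (m n : ℕ) (hmn : n ≤ m)
    (Y : R) (A : Matrix (Fin (2 * m)) (Fin (2 * n)) R) :
    (Matrix.fromBlocks (Y • sympJ R m) A (-Aᵀ) 0).det =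
      Y ^ (2 * (m - n)) * (Aᵀ * sympJ R m * A).det := by
  have generic := det_fromBlocks_smul_sympJ_of_isRegular hmn isRegular_X (A.map C)
  have evaluated := congrArg (evalRingHom Y) generic
  have hA : (A.map C).map (evalRingHom Y) = A := by ext; simp
  rwa [map_det_fromBlocks_smul_sympJ, map_pow_mul_det_transpose_mul_sympJ_mul, hA,
    coe_evalRingHom, eval_X] at evaluated

/-- The determinant of the block matrix `[[Y·J_m, A], [-Aᵀ, 0]]` equals
`Y^{2(m-n)} · det(Aᵀ · J_m · A)`. -/
theorem det_blocks_symplectic {R : Type*} [CommRing R] (m n : ℕ) (hn : 1 ≤ n) (hmn : n ≤ m)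
    (Y : R) (A : Matrix (Fin (2 * m)) (Fin (2 * n)) R) :
    (Matrix.fromBlocks (Y • sympJ R m) A (-Aᵀ) 0).det =
      Y ^ (2 * (m - n)) * (Aᵀ * sympJ R m * A).det :=
  det_blocks_symplectic_general m n hmn Y A
end

section
/- Let a, b, c be real numbers with 0 < a < 1, 0 < b < 1, c > 0, and abc < 1. Then the sum over all triples (X, Y, Z) of positive integers of a^X · b^{Y+Z} · c^{min(X, Y+Z)} converges and equals a·b²·c·(1 - a + ac - 2abc + a²b²c) / ((1 - abc)² · (1 - a) · (1 - b)²). -/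
/-!
Split `ℕ+ × ℕ+ × ℕ+` into the three regions `X ≤ Y`, `Y < X ≤ Y + Z` and `Y + Z < X`, on which
`min X (Y + Z)` is `X`, `X` and `Y + Z` respectively. Each region is the image of a linear map
(`Y = X + i`; `X = Y + j, Z = j + k`; `X = Y + Z + k`) under which the summand becomes a product
of three powers of `abc`, `a` or `b`, so each region contributes a product of three geometric
series, and the three products add up to the closed form.
-/

open Function

lemma hasSum_pow_pnat {r : ℝ} (h0 : 0 ≤ r) (h1 : r < 1) :
    HasSum (fun n : ℕ+ => r ^ (n : ℕ)) (r / (1 - r)) := by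
  rw [hasSum_pnat_iff, pow_zero, div_add_one (by linarith), add_sub_cancel, one_div]
  exact hasSum_geometric_of_lt_one h0 h1

lemma HasSum.mul_of_nonneg {ι κ : Type*} {f : ι → ℝ} {g : κ → ℝ} {s t : ℝ}
    (hf : HasSum f s) (hg : HasSum g t) (hf0 : 0 ≤ f) (hg0 : 0 ≤ g) :
    HasSum (fun x : ι × κ => f x.1 * g x.2) (s * t) :=
  hf.mul hg (hf.summable.mul_of_nonneg hg.summable hf0 hg0)

@[simp]
lemma Nat.coe_toPNat (n : ℕ) (h : 0 < n) : (n.toPNat h : ℕ) = n := rfl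

namespace MinThree

def weight {M : Type*} [CommMonoid M] (a b c : M) (p : ℕ+ × ℕ+ × ℕ+) : M :=
  a ^ (p.1 : ℕ) * b ^ ((p.2.1 : ℕ) + (p.2.2 : ℕ)) * c ^ min (p.1 : ℕ) ((p.2.1 : ℕ) + (p.2.2 : ℕ))

def paramLe (p : ℕ+ × ℕ × ℕ+) : ℕ+ × ℕ+ × ℕ+ :=
  (p.1, (p.1 + p.2.1 : ℕ).toPNat (by positivity), p.2.2)

def paramMid (p : ℕ+ × ℕ+ × ℕ) : ℕ+ × ℕ+ × ℕ+ :=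
  (p.1 + p.2.1, p.1, (p.2.1 + p.2.2 : ℕ).toPNat (by positivity))

def paramGt (p : ℕ+ × ℕ+ × ℕ+) : ℕ+ × ℕ+ × ℕ+ :=
  (p.2.1 + p.2.2 + p.1, p.2.1, p.2.2)

def param : (ℕ+ × ℕ × ℕ+) ⊕ (ℕ+ × ℕ+ × ℕ) ⊕ (ℕ+ × ℕ+ × ℕ+) → ℕ+ × ℕ+ × ℕ+ :=
  Sum.elim paramLe (Sum.elim paramMid paramGt)

lemma param_injective : Injective param := by
  rintro (⟨x, i, z⟩ | ⟨y, j, k⟩ | ⟨k, y, z⟩) (⟨x', i', z'⟩ | ⟨y', j', k'⟩ | ⟨k', y', z'⟩) h <;>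
    simp only [param, paramLe, paramMid, paramGt, Sum.elim_inl, Sum.elim_inr, Prod.mk.injEq,
      ← PNat.coe_inj, Nat.coe_toPNat, PNat.add_coe, Sum.inl.injEq, Sum.inr.injEq,
      reduceCtorEq] at h ⊢ <;>
    -- writing each positive coordinate as `natPred + 1` makes its positivity visible to `omega`
    simp only [← PNat.natPred_add_one] at h ⊢ <;>
    omega

lemma param_surjective : Surjective param := by
  rintro ⟨X, Y, Z⟩
  rcases le_or_gt (X : ℕ) Y with hXY | hYX
  · refine ⟨.inl (X, Y - X, Z), ?_⟩
    simp only [param, paramLe, Sum.elim_inl, Prod.mk.injEq, ← PNat.coe_inj, Nat.coe_toPNat,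
      true_and, and_true]
    omega
  rcases le_or_gt (X : ℕ) (Y + Z) with hXYZ | hYZX
  · refine ⟨.inr (.inl (Y, (X - Y : ℕ).toPNat (by omega), Y + Z - X)), ?_⟩
    simp only [param, paramMid, Sum.elim_inl, Sum.elim_inr, Prod.mk.injEq, ← PNat.coe_inj,
      Nat.coe_toPNat, PNat.add_coe, true_and]
    omega
  · refine ⟨.inr (.inr ((X - (Y + Z) : ℕ).toPNat (by omega), Y, Z)), ?_⟩
    simp only [param, paramGt, Sum.elim_inr, Prod.mk.injEq, ← PNat.coe_inj, Nat.coe_toPNat,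
      PNat.add_coe, and_true]
    omega

lemma param_bijective : Bijective param := ⟨param_injective, param_surjective⟩

section CommMonoid

variable {M : Type*} [CommMonoid M] (a b c : M)

lemma weight_paramLe (p : ℕ+ × ℕ × ℕ+) :
    weight a b c (paramLe p) = (a * b * c) ^ (p.1 : ℕ) * (b ^ p.2.1 * b ^ (p.2.2 : ℕ)) := by
  simp only [weight, paramLe, Nat.coe_toPNat]
  rw [min_eq_left (by omega)]
  simp only [mul_pow, pow_add]
  ac_rfl

lemma weight_paramMid (p : ℕ+ × ℕ+ × ℕ) :
    weight a b c (paramMid p) =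
      (a * b * c) ^ (p.1 : ℕ) * ((a * b * c) ^ (p.2.1 : ℕ) * b ^ p.2.2) := by
  simp only [weight, paramMid, Nat.coe_toPNat, PNat.add_coe]
  rw [min_eq_left (by omega)]
  simp only [mul_pow, pow_add]
  ac_rfl

lemma weight_paramGt (p : ℕ+ × ℕ+ × ℕ+) :
    weight a b c (paramGt p) =
      a ^ (p.1 : ℕ) * ((a * b * c) ^ (p.2.1 : ℕ) * (a * b * c) ^ (p.2.2 : ℕ)) := by
  simp only [weight, paramGt, PNat.add_coe]
  rw [min_eq_right (by omega)]
  simp only [mul_pow, pow_add]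
  ac_rfl

end CommMonoid

section Real

variable {a b c : ℝ}

lemma hasSum_weight_comp_paramLe (hb0 : 0 ≤ b) (hb1 : b < 1) (ht0 : 0 ≤ a * b * c)
    (ht1 : a * b * c < 1) :
    HasSum (weight a b c ∘ paramLe)
      (a * b * c / (1 - a * b * c) * ((1 - b)⁻¹ * (b / (1 - b)))) := by
  rw [show weight a b c ∘ paramLe = _ from funext (weight_paramLe a b c)]
  exact (hasSum_pow_pnat ht0 ht1).mul_of_nonneg
    ((hasSum_geometric_of_lt_one hb0 hb1).mul_of_nonneg (hasSum_pow_pnat hb0 hb1)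
      (fun _ => by positivity) (fun _ => by positivity))
    (fun _ => by positivity) (fun _ => by positivity)

lemma hasSum_weight_comp_paramMid (hb0 : 0 ≤ b) (hb1 : b < 1) (ht0 : 0 ≤ a * b * c)
    (ht1 : a * b * c < 1) :
    HasSum (weight a b c ∘ paramMid)
      (a * b * c / (1 - a * b * c) * (a * b * c / (1 - a * b * c) * (1 - b)⁻¹)) := by
  rw [show weight a b c ∘ paramMid = _ from funext (weight_paramMid a b c)]
  exact (hasSum_pow_pnat ht0 ht1).mul_of_nonneg
    ((hasSum_pow_pnat ht0 ht1).mul_of_nonneg (hasSum_geometric_of_lt_one hb0 hb1)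
      (fun _ => by positivity) (fun _ => by positivity))
    (fun _ => by positivity) (fun _ => by positivity)

lemma hasSum_weight_comp_paramGt (ha0 : 0 ≤ a) (ha1 : a < 1) (ht0 : 0 ≤ a * b * c)
    (ht1 : a * b * c < 1) :
    HasSum (weight a b c ∘ paramGt)
      (a / (1 - a) * (a * b * c / (1 - a * b * c) * (a * b * c / (1 - a * b * c)))) := by
  rw [show weight a b c ∘ paramGt = _ from funext (weight_paramGt a b c)]
  exact (hasSum_pow_pnat ha0 ha1).mul_of_nonneg
    ((hasSum_pow_pnat ht0 ht1).mul_of_nonneg (hasSum_pow_pnat ht0 ht1)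
      (fun _ => by positivity) (fun _ => by positivity))
    (fun _ => by positivity) (fun _ => by positivity)

end Real

end MinThree

open MinThree in
/-- For `0 < a < 1`, `0 < b < 1`, `c > 0` with `abc < 1`, the sum over triples of positive
integers `(X, Y, Z)` of `a^X b^{Y+Z} c^{min(X,Y+Z)}` converges to
`ab²c(1 - a + ac - 2abc + a²b²c) / ((1 - abc)²(1 - a)(1 - b)²)`. -/
theorem hasSum_min_three (a b c : ℝ) (ha : 0 < a) (ha1 : a < 1) (hb : 0 < b) (hb1 : b < 1)
    (hc : 0 < c) (habc : a * b * c < 1) :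
    HasSum (fun XYZ : ℕ+ × ℕ+ × ℕ+ =>
        a ^ (XYZ.1 : ℕ) * b ^ ((XYZ.2.1 : ℕ) + (XYZ.2.2 : ℕ)) *
          c ^ (min (XYZ.1 : ℕ) ((XYZ.2.1 : ℕ) + (XYZ.2.2 : ℕ))))
      (a * b ^ 2 * c * (1 - a + a * c - 2 * a * b * c + a ^ 2 * b ^ 2 * c) /
        ((1 - a * b * c) ^ 2 * (1 - a) * (1 - b) ^ 2)) := by
  show HasSum (weight a b c) _
  have ht0 : 0 ≤ a * b * c := by positivity
  have hparam : HasSum (weight a b c ∘ param) _ :=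
    HasSum.sum (hasSum_weight_comp_paramLe hb.le hb1 ht0 habc)
      (HasSum.sum (hasSum_weight_comp_paramMid hb.le hb1 ht0 habc)
        (hasSum_weight_comp_paramGt ha.le ha1 ht0 habc))
  have hsum := (Equiv.ofBijective param param_bijective).hasSum_iff.mp hparam
  have : 1 - a ≠ 0 := by linarith
  have : 1 - b ≠ 0 := by linarith
  have : 1 - a * b * c ≠ 0 := by linarith
  convert hsum using 1
  field_simp
  ring
end

section
/- Let p be a prime, q = p, and let μ be the Haar measure on ℤ_p² = ℤ_p × ℤ_p normalized so that μ(ℤ_p²) = 1. Then for all real numbers s, t > 0, the integral over (x, y) ∈ pℤ_p × pℤ_p of |x|_p^s · max(|x|_p, |y|_p)^t with respect to μ equals q^{-2-s-t}(1 - q^{-2-s})(1 - q^{-1}) / ((1 - q^{-2-s-t})(1 - q^{-1-s})). -/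
/-!
Away from the null set `xy = 0`, the domain `pℤ_p × pℤ_p` is the disjoint union of the products
of spheres `|x| = p^{-m-1}`, `|y| = p^{-n-1}`. The closed ball `|x| ≤ p^{-k}` is the ideal
`p^k ℤ_p`, an additive subgroup of index `p^k`, so it has measure `p^{-k}` and the sphere
`|x| = p^{-k}` has measure `p^{-k}(1 - p^{-1})`. The integrand is constant on each product of
spheres, which turns the integral into `p^{-2-s-t}(1 - p^{-1})^2 ∑ a^m b^n c^{min(m,n)}` with
`a = p^{-1-s}`, `b = p^{-1}`, `c = p^{-t}`, and that series sums to
`(1 - ab) / ((1 - a)(1 - b)(1 - abc))`.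
-/

open MeasureTheory

noncomputable instance padicIntMeasurableSpace (p : ℕ) [Fact p.Prime] :
    MeasurableSpace ℤ_[p] := borel _

instance padicIntBorelSpace (p : ℕ) [Fact p.Prime] : BorelSpace ℤ_[p] := ⟨rfl⟩

/-- The Haar measure on `ℤ_[p]`, normalized so that `ℤ_[p]` itself has measure `1`. -/
noncomputable def padicHaar (p : ℕ) [Fact p.Prime] : Measure ℤ_[p] :=
  Measure.addHaarMeasure ⊤

instance padicHaarProb (p : ℕ) [Fact p.Prime] : IsProbabilityMeasure (padicHaar p) := ⟨by
  simpa [padicHaar] using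
    Measure.addHaarMeasure_self (K₀ := (⊤ : TopologicalSpace.PositiveCompacts ℤ_[p]))⟩

open Metric Function

lemma summable_pow_mul_pow_mul_pow_min {a b c : ℝ} (ha : 0 ≤ a) (ha1 : a < 1) (hb : 0 ≤ b)
    (hb1 : b < 1) (hc : 0 ≤ c) (hc1 : c ≤ 1) :
    Summable fun i : ℕ × ℕ => a ^ i.1 * b ^ i.2 * c ^ min i.1 i.2 :=
  ((summable_geometric_of_lt_one ha ha1).mul_of_nonneg (summable_geometric_of_lt_one hb hb1)
    (fun _ => by positivity) fun _ => by positivity).of_nonneg_of_le (fun _ => by positivity)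
    fun _ => mul_le_of_le_one_right (by positivity) (pow_le_one₀ hc hc1)

lemma tsum_pow_mul_pow_mul_pow_min {a b c : ℝ} (ha : 0 ≤ a) (ha1 : a < 1) (hb : 0 ≤ b)
    (hb1 : b < 1) (hc : 0 ≤ c) (hc1 : c ≤ 1) :
    ∑' i : ℕ × ℕ, a ^ i.1 * b ^ i.2 * c ^ min i.1 i.2 =
      (1 - a * b) / ((1 - a) * (1 - b) * (1 - a * b * c)) := by
  set F : ℕ × ℕ → ℝ := fun i => a ^ i.1 * b ^ i.2 * c ^ min i.1 i.2
  have hF : Summable F := summable_pow_mul_pow_mul_pow_min ha ha1 hb hb1 hc hc1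
  -- Shifting both indices multiplies a term by `a * b * c`, so the sum reproduces itself.
  have hrow (m : ℕ) : ∑' n, F (m + 1, n) = a ^ (m + 1) + a * b * c * ∑' n, F (m, n) := by
    rw [(hF.prod_factor (m + 1)).tsum_eq_zero_add, ← tsum_mul_left]
    congr 1
    · simp [F]
    · refine tsum_congr fun n => ?_
      simp only [F, Nat.succ_min_succ, pow_succ]
      ring
  have hgeom : HasSum (fun m : ℕ => a ^ (m + 1)) (a / (1 - a)) := by
    simpa only [pow_succ, div_eq_inv_mul] using (hasSum_geometric_of_lt_one ha ha1).mul_right a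
  have hS : ∑' i, F i = (1 - b)⁻¹ + (a / (1 - a) + a * b * c * ∑' i, F i) := by
    calc ∑' i, F i = ∑' n, F (0, n) + ∑' m, ∑' n, F (m + 1, n) := by
          rw [hF.tsum_prod' hF.prod_factor, hF.prod.tsum_eq_zero_add]
      _ = (1 - b)⁻¹ + ∑' m, (a ^ (m + 1) + a * b * c * ∑' n, F (m, n)) := by
          simp only [F, hrow, pow_zero, one_mul, Nat.zero_min, mul_one,
            tsum_geometric_of_lt_one hb hb1]
      _ = (1 - b)⁻¹ + (a / (1 - a) + a * b * c * ∑' i, F i) := by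
          rw [hgeom.summable.tsum_add (hF.prod.mul_left _), hgeom.tsum_eq, tsum_mul_left,
            hF.tsum_prod' hF.prod_factor]
  have h1 : 1 - a ≠ 0 := by linarith
  have h2 : 1 - b ≠ 0 := by linarith
  have h3 : 1 - a * b * c ≠ 0 := by
    have : a * b * c < 1 := by nlinarith [mul_nonneg ha hb, mul_le_one₀ ha1.le hb hb1.le]
    linarith
  rw [eq_div_iff (by positivity)]
  field_simp at hS
  linear_combination hS

namespace PadicInt

variable {p : ℕ} [Fact p.Prime]

lemma inv_prime_pos : 0 < (p : ℝ)⁻¹ := inv_pos.mpr (Nat.cast_pos.mpr (Fact.out : p.Prime).pos)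

lemma inv_prime_lt_one : (p : ℝ)⁻¹ < 1 :=
  inv_lt_one_of_one_lt₀ (by exact_mod_cast (Fact.out : p.Prime).one_lt)

lemma index_span_p_pow (n : ℕ) :
    (Ideal.span {(p : ℤ_[p]) ^ n}).toAddSubgroup.index = p ^ n := by
  let f : ℤ_[p] →+ ZMod (p ^ n) := (toZModPow n : ℤ_[p] →+* ZMod (p ^ n))
  have hker : (Ideal.span {(p : ℤ_[p]) ^ n}).toAddSubgroup = f.ker := by
    ext x
    simp [f, ← ker_toZModPow]
  rw [hker, AddSubgroup.index_ker, AddMonoidHom.range_eq_top.mpr (ZMod.ringHom_surjective _),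
    AddSubgroup.card_top, Nat.card_zmod]

lemma closedBall_zero_inv_pow_eq_span (n : ℕ) :
    closedBall (0 : ℤ_[p]) ((p : ℝ)⁻¹ ^ n) = (Ideal.span {(p : ℤ_[p]) ^ n}).toAddSubgroup := by
  ext x
  rw [mem_closedBall_zero_iff, inv_pow, ← zpow_natCast, ← zpow_neg]
  exact norm_le_pow_iff_mem_span_pow x n

lemma sphere_zero_inv_pow_eq_sdiff (n : ℕ) :
    sphere (0 : ℤ_[p]) ((p : ℝ)⁻¹ ^ n) =
      closedBall 0 ((p : ℝ)⁻¹ ^ n) \ closedBall 0 ((p : ℝ)⁻¹ ^ (n + 1)) := by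
  ext x
  have hlt : ‖x‖ ≤ (p : ℝ)⁻¹ ^ (n + 1) ↔ ‖x‖ < (p : ℝ)⁻¹ ^ n := by
    simpa [← zpow_natCast, ← zpow_neg, neg_add_cancel_right] using
      norm_le_pow_iff_norm_lt_pow_add_one x (-(n + 1 : ℕ))
  rw [mem_sphere_zero_iff_norm, Set.mem_sdiff, mem_closedBall_zero_iff, mem_closedBall_zero_iff,
    hlt, not_lt, le_antisymm_iff]

lemma ball_zero_one_sdiff_zero :
    ball (0 : ℤ_[p]) 1 \ {0} = ⋃ n : ℕ, sphere 0 ((p : ℝ)⁻¹ ^ (n + 1)) := by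
  ext x
  simp only [Set.mem_sdiff, mem_ball_zero_iff, Set.mem_singleton_iff, Set.mem_iUnion,
    mem_sphere_zero_iff_norm]
  constructor
  · rintro ⟨hlt, hx⟩
    rw [norm_eq_zpow_neg_valuation hx, zpow_neg, zpow_natCast, ← inv_pow] at hlt ⊢
    have hv : x.valuation ≠ 0 := by
      rintro hv
      simp [hv] at hlt
    exact ⟨x.valuation - 1, by rw [Nat.sub_add_cancel (Nat.pos_of_ne_zero hv)]⟩
  · rintro ⟨n, hn⟩
    refine ⟨hn ▸ pow_lt_one₀ inv_prime_pos.le inv_prime_lt_one n.succ_ne_zero, ?_⟩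
    rintro rfl
    rw [norm_zero] at hn
    exact (pow_pos inv_prime_pos _).ne hn

lemma pairwise_disjoint_sphere_prod_sphere :
    Pairwise (Disjoint on fun i : ℕ × ℕ =>
      sphere (0 : ℤ_[p]) ((p : ℝ)⁻¹ ^ (i.1 + 1)) ×ˢ
        sphere (0 : ℤ_[p]) ((p : ℝ)⁻¹ ^ (i.2 + 1))) := by
  have hinj : Injective fun n : ℕ => (p : ℝ)⁻¹ ^ (n + 1) :=
    (pow_right_injective₀ inv_prime_pos inv_prime_lt_one.ne).comp (add_left_injective 1)
  have hsphere {m n : ℕ} (h : m ≠ n) :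
      Disjoint (sphere (0 : ℤ_[p]) ((p : ℝ)⁻¹ ^ (m + 1))) (sphere 0 ((p : ℝ)⁻¹ ^ (n + 1))) :=
    Set.disjoint_left.mpr fun x hm hn => h <| hinj <|
      (mem_sphere_zero_iff_norm.mp hm).symm.trans (mem_sphere_zero_iff_norm.mp hn)
  rintro ⟨m, n⟩ ⟨m', n'⟩ hne
  rw [onFun, Set.disjoint_prod]
  by_cases hm : m = m'
  · subst hm
    exact Or.inr (hsphere fun hn => hne (Prod.ext rfl hn))
  · exact Or.inl (hsphere hm)

section LeftInvariant

variable (μ : Measure ℤ_[p]) [μ.IsAddLeftInvariant]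

lemma measure_closedBall_zero_inv_pow (n : ℕ) :
    μ (closedBall 0 ((p : ℝ)⁻¹ ^ n)) = ((p : ENNReal) ^ n)⁻¹ * μ Set.univ := by
  have hp : (p : ENNReal) ^ n ≠ 0 := by simp [(Fact.out : p.Prime).ne_zero]
  have : (Ideal.span {(p : ℤ_[p]) ^ n}).toAddSubgroup.FiniteIndex :=
    ⟨by simp [index_span_p_pow, (Fact.out : p.Prime).ne_zero]⟩
  have key := AddSubgroup.index_mul_measure _
    (closedBall_zero_inv_pow_eq_span (p := p) n ▸ measurableSet_closedBall) μ
  rw [index_span_p_pow, ← closedBall_zero_inv_pow_eq_span, Nat.cast_pow] at key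
  rw [← key, ← mul_assoc, ENNReal.inv_mul_cancel hp (by simp), one_mul]

variable [IsFiniteMeasure μ]

lemma measure_singleton_zero : μ {0} = 0 := by
  have hp : (1 : ENNReal) < p := by exact_mod_cast (Fact.out : p.Prime).one_lt
  have hle (n : ℕ) : μ {0} ≤ ((p : ENNReal)⁻¹) ^ n * μ Set.univ := by
    rw [← ENNReal.inv_pow, ← measure_closedBall_zero_inv_pow]
    exact measure_mono (by simp [pow_nonneg])
  have hlim : Filter.Tendsto (fun n : ℕ => (p : ENNReal)⁻¹ ^ n * μ Set.univ) Filter.atTop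
      (nhds 0) := by
    simpa using ENNReal.Tendsto.mul_const (ENNReal.tendsto_pow_atTop_nhds_zero_of_lt_one
      (ENNReal.inv_lt_one.mpr hp)) (Or.inr (measure_ne_top μ Set.univ))
  exact nonpos_iff_eq_zero.mp (ge_of_tendsto' hlim hle)

lemma measureReal_sphere_zero_inv_pow (n : ℕ) :
    μ.real (sphere 0 ((p : ℝ)⁻¹ ^ n)) = (p : ℝ)⁻¹ ^ n * (1 - (p : ℝ)⁻¹) * μ.real Set.univ := by
  rw [sphere_zero_inv_pow_eq_sdiff, measureReal_sdiff (closedBall_subset_closedBall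
      (pow_le_pow_of_le_one inv_prime_pos.le inv_prime_lt_one.le n.le_succ))
      measurableSet_closedBall, measureReal_def, measureReal_def,
    measure_closedBall_zero_inv_pow, measure_closedBall_zero_inv_pow]
  simp [measureReal_def]
  ring

lemma ball_zero_one_prod_ae_eq :
    ball (0 : ℤ_[p]) 1 ×ˢ ball (0 : ℤ_[p]) 1 =ᵐ[μ.prod μ]
      ⋃ i : ℕ × ℕ, sphere 0 ((p : ℝ)⁻¹ ^ (i.1 + 1)) ×ˢ sphere 0 ((p : ℝ)⁻¹ ^ (i.2 + 1)) := by
  have h : ball (0 : ℤ_[p]) 1 =ᵐ[μ] ⋃ n : ℕ, sphere 0 ((p : ℝ)⁻¹ ^ (n + 1)) := by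
    rw [← ball_zero_one_sdiff_zero]
    exact (sdiff_null_ae_eq_self (measure_singleton_zero μ)).symm
  simpa only [← Set.iUnion_prod] using Measure.set_prod_ae_eq h h

lemma setIntegral_ball_zero_one_prod {f : ℤ_[p] × ℤ_[p] → ℝ} (hf : Integrable f (μ.prod μ)) :
    ∫ z in ball 0 1 ×ˢ ball 0 1, f z ∂(μ.prod μ) =
      ∑' i : ℕ × ℕ, ∫ z in sphere 0 ((p : ℝ)⁻¹ ^ (i.1 + 1)) ×ˢ sphere 0 ((p : ℝ)⁻¹ ^ (i.2 + 1)),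
        f z ∂(μ.prod μ) := by
  rw [setIntegral_congr_set (ball_zero_one_prod_ae_eq μ)]
  exact integral_iUnion (fun _ => isClosed_sphere.measurableSet.prod isClosed_sphere.measurableSet)
    pairwise_disjoint_sphere_prod_sphere hf.integrableOn

end LeftInvariant

lemma setIntegral_sphere_prod_sphere (μ : Measure ℤ_[p]) [μ.IsAddLeftInvariant]
    [IsProbabilityMeasure μ] (s t : ℝ) (m n : ℕ) :
    ∫ z in sphere (0 : ℤ_[p]) ((p : ℝ)⁻¹ ^ (m + 1)) ×ˢ sphere 0 ((p : ℝ)⁻¹ ^ (n + 1)),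
        ‖z.1‖ ^ s * max ‖z.1‖ ‖z.2‖ ^ t ∂(μ.prod μ) =
      (1 - (p : ℝ)⁻¹) ^ 2 * ((p : ℝ)⁻¹ ^ 2 * (p : ℝ)⁻¹ ^ s * (p : ℝ)⁻¹ ^ t) *
        (((p : ℝ)⁻¹ * (p : ℝ)⁻¹ ^ s) ^ m * (p : ℝ)⁻¹ ^ n * ((p : ℝ)⁻¹ ^ t) ^ min m n) := by
  set r : ℝ := (p : ℝ)⁻¹
  have hr : 0 ≤ r := inv_prime_pos.le
  have hconst : Set.EqOn (fun z : ℤ_[p] × ℤ_[p] => ‖z.1‖ ^ s * max ‖z.1‖ ‖z.2‖ ^ t)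
      (fun _ => (r ^ s) ^ (m + 1) * (r ^ t) ^ (min m n + 1))
      (sphere 0 (r ^ (m + 1)) ×ˢ sphere 0 (r ^ (n + 1))) := by
    rintro z ⟨h1, h2⟩
    rw [mem_sphere_zero_iff_norm] at h1 h2
    have hmax : max ‖z.1‖ ‖z.2‖ = r ^ (min m n + 1) := by
      rw [h1, h2, ← (pow_right_anti₀ hr inv_prime_lt_one.le).map_min, min_add_add_right]
    dsimp only
    rw [hmax, h1, Real.rpow_pow_comm hr, Real.rpow_pow_comm hr]
  rw [setIntegral_congr_fun (isClosed_sphere.measurableSet.prod isClosed_sphere.measurableSet)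
    hconst, setIntegral_const, measureReal_prod_prod, measureReal_sphere_zero_inv_pow,
    measureReal_sphere_zero_inv_pow, probReal_univ, smul_eq_mul]
  ring

end PadicInt

instance padicHaar_isAddLeftInvariant (p : ℕ) [Fact p.Prime] :
    (padicHaar p).IsAddLeftInvariant := by
  unfold padicHaar
  infer_instance

open PadicInt

/-- `∫_{pℤ_p × pℤ_p} |x|^s max(|x|,|y|)^t dμ
  = q^{-2-s-t}(1-q^{-2-s})(1-q^{-1}) / ((1-q^{-2-s-t})(1-q^{-1-s}))`, where `q = p` and `μ` is
the Haar measure on `ℤ_p²` with `μ(ℤ_p²) = 1`.  Here `pℤ_p = {x : ‖x‖ < 1}`. -/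
theorem integral_x_max_xy (p : ℕ) [Fact p.Prime] (s t : ℝ) (hs : 0 < s) (ht : 0 < t) :
    ∫ z in {z : ℤ_[p] × ℤ_[p] | ‖z.1‖ < 1 ∧ ‖z.2‖ < 1},
        ‖z.1‖ ^ s * max ‖z.1‖ ‖z.2‖ ^ t ∂((padicHaar p).prod (padicHaar p)) =
      (p : ℝ) ^ (-2 - s - t) * (1 - (p : ℝ) ^ (-2 - s)) * (1 - (p : ℝ)⁻¹) /
        ((1 - (p : ℝ) ^ (-2 - s - t)) * (1 - (p : ℝ) ^ (-1 - s))) := by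
  have hf : Continuous fun z : ℤ_[p] × ℤ_[p] => ‖z.1‖ ^ s * max ‖z.1‖ ‖z.2‖ ^ t := by
    fun_prop (disch := positivity)
  have hD : {z : ℤ_[p] × ℤ_[p] | ‖z.1‖ < 1 ∧ ‖z.2‖ < 1} = ball 0 1 ×ˢ ball 0 1 :=
    Set.ext fun _ => by simp
  have hpow (u : ℝ) : (p : ℝ) ^ (-u) = (p : ℝ)⁻¹ ^ u := by
    rw [Real.rpow_neg (Nat.cast_nonneg p), Real.inv_rpow (Nat.cast_nonneg p)]
  have hr0 : 0 < (p : ℝ)⁻¹ := inv_prime_pos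
  have hr1 : (p : ℝ)⁻¹ < 1 := inv_prime_lt_one
  have hrs : (p : ℝ)⁻¹ ^ s < 1 := Real.rpow_lt_one hr0.le hr1 hs
  have hrt : (p : ℝ)⁻¹ ^ t < 1 := Real.rpow_lt_one hr0.le hr1 ht
  have hrs0 : 0 ≤ (p : ℝ)⁻¹ ^ s := Real.rpow_nonneg hr0.le s
  have hrt0 : 0 ≤ (p : ℝ)⁻¹ ^ t := Real.rpow_nonneg hr0.le t
  rw [hD, setIntegral_ball_zero_one_prod _
      (hf.integrable_of_hasCompactSupport (.of_compactSpace _)),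
    tsum_congr fun i : ℕ × ℕ => setIntegral_sphere_prod_sphere (padicHaar p) s t i.1 i.2,
    tsum_mul_left, tsum_pow_mul_pow_mul_pow_min (by positivity) (by nlinarith) hr0.le hr1 hrt0
      hrt.le]
  rw [show -2 - s - t = -(2 + s + t) by ring, show -2 - s = -(2 + s) by ring,
    show -1 - s = -(1 + s) by ring, hpow, hpow, hpow, Real.rpow_add hr0, Real.rpow_add hr0,
    Real.rpow_add hr0, Real.rpow_one, Real.rpow_two]
  generalize (p : ℝ)⁻¹ = r at hr0 hr1 hrs hrt hrs0 hrt0 ⊢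
  generalize r ^ s = x at hrs hrs0 ⊢
  generalize r ^ t = y at hrt hrt0 ⊢
  have h1 : 1 - r ≠ 0 := by linarith
  have h2 : 1 - r * x ≠ 0 := by nlinarith
  have h3 : 1 - r ^ 2 * x * y ≠ 0 := by
    nlinarith [mul_nonneg hrs0 hrt0, mul_le_one₀ hrs.le hrt0 hrt.le,
      pow_lt_one₀ hr0.le hr1 two_ne_zero]
  field_simp
end

section
/- Let p be a prime, q = p, and let μ be the Haar measure on ℤ_p⁵ normalized so that μ(ℤ_p⁵) = 1. Let Ω₁ be the set of (x, y, ỹ₁, ỹ₂, ỹ₃) ∈ (pℤ_p)⁵ such that |x|_p = max(|x|_p, |y|_p, |ỹ₁|_p, |ỹ₂|_p, |ỹ₃|_p). Then for all real numbers ρ, τ > 0, the integral over Ω₁ of |x|_p^{τ+4ρ} dμ equals q^{-5-τ-4ρ}(1 - q^{-1}) / (1 - q^{-5-τ-4ρ}). -/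
/-! On `Ω₁` the coordinate `x` dominates the other four, so by Fubini the integral is
`∫_{pℤ_p} |x|^{τ+4ρ} μ(B(|x|))⁴ dx`, where `B(r)` is the closed ball of radius `r` about `0`.
The ball of radius `p^{-n}` is the subgroup `p^n ℤ_p` of index `p^n`, so `μ(B(|x|)) = |x|`, and the
remaining integral `∫_{pℤ_p} |x|^t dx` splits over the spheres `|x| = p^{-n}`, `n ≥ 1`, of measure
`p^{-n}(1 - p⁻¹)`, into a geometric series of ratio `p^{-1-t}`. -/

open MeasureTheory

/-- The product Haar measure on `ℤ_p⁵`, with coordinates `(x, y, ỹ₁, ỹ₂, ỹ₃)`, normalized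
to total mass `1`. -/
noncomputable def padicHaar5 (p : ℕ) [Fact p.Prime] :
    Measure (ℤ_[p] × ℤ_[p] × ℤ_[p] × ℤ_[p] × ℤ_[p]) :=
  (padicHaar p).prod ((padicHaar p).prod ((padicHaar p).prod
    ((padicHaar p).prod (padicHaar p))))

open Metric

theorem setIntegral_prod_comp_fst {α β : Type*} [MeasurableSpace α] [MeasurableSpace β]
    {μ : Measure α} {ν : Measure β} [SFinite μ] [SFinite ν] {s : Set (α × β)}
    (hs : MeasurableSet s) {f : α → ℝ} (hf : IntegrableOn (fun z ↦ f z.1) s (μ.prod ν)) :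
    ∫ z in s, f z.1 ∂μ.prod ν = ∫ x, ν.real (Prod.mk x ⁻¹' s) * f x ∂μ := by
  rw [← integral_indicator hs, integral_prod _ ((integrable_indicator_iff hs).2 hf)]
  congr 1 with x
  rw [← smul_eq_mul, ← integral_indicator_const _ (measurable_prodMk_left hs)]
  rfl

theorem measureReal_prod_closedBall_zero {α β : Type*} [SeminormedAddGroup α]
    [SeminormedAddGroup β] [MeasurableSpace α] [MeasurableSpace β] (μ : Measure α) (ν : Measure β)
    [SFinite ν] (r : ℝ) :
    (μ.prod ν).real (closedBall 0 r) = μ.real (closedBall 0 r) * ν.real (closedBall 0 r) := by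
  rw [← Prod.mk_zero_zero, ← closedBall_prod_same, measureReal_prod_prod]

theorem setOf_norm_fst_eq_max_norm {E : Type*} [Norm E] :
    {z : E × E × E × E × E |
        ‖z.1‖ < 1 ∧ ‖z.2.1‖ < 1 ∧ ‖z.2.2.1‖ < 1 ∧ ‖z.2.2.2.1‖ < 1 ∧ ‖z.2.2.2.2‖ < 1 ∧
        ‖z.1‖ = max (max (max (max ‖z.1‖ ‖z.2.1‖) ‖z.2.2.1‖) ‖z.2.2.2.1‖) ‖z.2.2.2.2‖} =
      {z | ‖z.1‖ < 1 ∧ ‖z.2‖ ≤ ‖z.1‖} := by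
  ext ⟨a, b, c, d, e⟩
  simp only [Set.mem_ofPred_eq, Prod.norm_def, max_le_iff]
  constructor
  · rintro ⟨ha, -, -, -, -, h⟩
    exact ⟨ha, by refine ⟨?_, ?_, ?_, ?_⟩ <;> rw [h] <;> simp⟩
  · rintro ⟨ha, hb, hc, hd, he⟩
    exact ⟨ha, hb.trans_lt ha, hc.trans_lt ha, hd.trans_lt ha, he.trans_lt ha, by simp [*]⟩

theorem measureReal_preimage_mk_setOf_norm_snd_le {α β : Type*} [Norm α] [SeminormedAddGroup β]
    [MeasurableSpace β] (ν : Measure β) (x : α) :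
    ν.real (Prod.mk x ⁻¹' {z : α × β | ‖z.1‖ < 1 ∧ ‖z.2‖ ≤ ‖z.1‖}) =
      if ‖x‖ < 1 then ν.real (closedBall 0 ‖x‖) else 0 := by
  split_ifs with hx
  · congr 1 with y
    simp [hx]
  · simp [hx]

section Padic

variable (p : ℕ) [Fact p.Prime]

theorem inv_natCast_pos_of_prime : 0 < (p : ℝ)⁻¹ :=
  inv_pos.2 (mod_cast (Fact.out : p.Prime).pos)

theorem inv_natCast_lt_one_of_prime : (p : ℝ)⁻¹ < 1 :=
  inv_lt_one_of_one_lt₀ (mod_cast (Fact.out : p.Prime).one_lt)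

instance : (padicHaar p).IsAddLeftInvariant := by
  unfold padicHaar; infer_instance

theorem padicHaar_closedBall_inv_pow (n : ℕ) :
    (padicHaar p).real (closedBall 0 ((p : ℝ)⁻¹ ^ n)) = (p : ℝ)⁻¹ ^ n := by
  set H := (PadicInt.toZModPow n : ℤ_[p] →+* ZMod (p ^ n)).toAddMonoidHom.ker
  have hH : (H : Set ℤ_[p]) = closedBall 0 ((p : ℝ)⁻¹ ^ n) := by
    ext x
    rw [mem_closedBall_zero_iff, inv_pow, ← zpow_natCast, ← zpow_neg,
      PadicInt.norm_le_pow_iff_mem_span_pow, ← PadicInt.ker_toZModPow]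
    rfl
  have hindex : H.index = p ^ n := by
    rw [AddSubgroup.index_ker, AddMonoidHom.range_eq_top.2 (ZMod.ringHom_surjective _)]
    simp
  have h := H.index_mul_measure (hH ▸ isClosed_closedBall.measurableSet) (padicHaar p)
  rw [hindex, measure_univ, hH] at h
  rw [measureReal_def, ENNReal.eq_inv_of_mul_eq_one_left (a := padicHaar p _) (by rwa [mul_comm])]
  simp

theorem padicHaar_singleton_zero : padicHaar p {0} = 0 := by
  refine (measureReal_eq_zero_iff (measure_ne_top _ _)).1 (le_antisymm ?_ measureReal_nonneg)
  refine ge_of_tendsto' (tendsto_pow_atTop_nhds_zero_of_lt_one (by positivity)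
    (inv_natCast_lt_one_of_prime p)) fun n ↦ ?_
  rw [← padicHaar_closedBall_inv_pow]
  exact measureReal_mono (by simp [closedBall])

theorem padicHaar_closedBall_norm (x : ℤ_[p]) : (padicHaar p).real (closedBall 0 ‖x‖) = ‖x‖ := by
  rcases eq_or_ne x 0 with rfl | hx
  · simp [measureReal_def, padicHaar_singleton_zero]
  · rw [PadicInt.norm_eq_zpow_neg_valuation hx, zpow_neg, zpow_natCast, ← inv_pow,
      padicHaar_closedBall_inv_pow]

theorem closedBall_inv_pow_succ (n : ℕ) :
    closedBall (0 : ℤ_[p]) ((p : ℝ)⁻¹ ^ (n + 1)) = ball 0 ((p : ℝ)⁻¹ ^ n) := by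
  ext x
  rw [mem_closedBall_zero_iff, mem_ball_zero_iff, inv_pow, inv_pow, ← zpow_natCast,
    ← zpow_natCast, ← zpow_neg, ← zpow_neg, PadicInt.norm_le_pow_iff_norm_lt_pow_add_one]
  push_cast
  ring_nf

theorem padicHaar_sphere_inv_pow (n : ℕ) :
    (padicHaar p).real (sphere 0 ((p : ℝ)⁻¹ ^ n)) = (p : ℝ)⁻¹ ^ n * (1 - (p : ℝ)⁻¹) := by
  rw [← closedBall_sdiff_ball, ← closedBall_inv_pow_succ, measureReal_sdiff
    (closedBall_subset_closedBall (pow_le_pow_of_le_one (by positivity)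
      (inv_natCast_lt_one_of_prime p).le (by omega)))
    isClosed_closedBall.measurableSet, padicHaar_closedBall_inv_pow, padicHaar_closedBall_inv_pow]
  ring

theorem iUnion_sphere_inv_pow_succ :
    ⋃ n : ℕ, sphere (0 : ℤ_[p]) ((p : ℝ)⁻¹ ^ (n + 1)) = ball 0 1 \ {0} := by
  ext x
  simp only [Set.mem_iUnion, mem_sphere_zero_iff_norm, Set.mem_sdiff, mem_ball_zero_iff,
    Set.mem_singleton_iff]
  constructor
  · rintro ⟨n, hn⟩
    refine ⟨hn ▸ pow_lt_one₀ (inv_natCast_pos_of_prime p).le (inv_natCast_lt_one_of_prime p)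
      (by omega), ?_⟩
    rintro rfl
    exact (pow_pos (inv_natCast_pos_of_prime p) _).ne' (hn.symm.trans norm_zero)
  · rintro ⟨hlt, hx⟩
    have hnorm : ‖x‖ = (p : ℝ)⁻¹ ^ x.valuation := by
      rw [PadicInt.norm_eq_zpow_neg_valuation hx, zpow_neg, zpow_natCast, inv_pow]
    obtain ⟨n, hn⟩ := Nat.exists_eq_succ_of_ne_zero (n := x.valuation)
      (by rintro h; simp [hnorm, h] at hlt)
    exact ⟨n, by rw [hnorm, hn]⟩

theorem setIntegral_ball_one_norm_rpow (t : ℝ) (ht : 0 ≤ t) :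
    ∫ x in ball (0 : ℤ_[p]) 1, ‖x‖ ^ t ∂padicHaar p =
      (p : ℝ) ^ (-1 - t) * (1 - (p : ℝ)⁻¹) / (1 - (p : ℝ) ^ (-1 - t)) := by
  have hq0 := inv_natCast_pos_of_prime p
  have hq1 := inv_natCast_lt_one_of_prime p
  have hr : (p : ℝ) ^ (-1 - t) = (p : ℝ)⁻¹ ^ (1 + t) := by
    rw [Real.inv_rpow (by positivity), ← Real.rpow_neg (by positivity), neg_add']
  have hr1 : (p : ℝ)⁻¹ ^ (1 + t) < 1 := Real.rpow_lt_one hq0.le hq1 (by linarith)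
  have hterm (n : ℕ) : ∫ x in sphere 0 ((p : ℝ)⁻¹ ^ (n + 1)), ‖x‖ ^ t ∂padicHaar p =
      (1 - (p : ℝ)⁻¹) * ((p : ℝ)⁻¹ ^ (1 + t)) ^ (n + 1) := by
    rw [setIntegral_congr_fun isClosed_sphere.measurableSet
      (fun x hx ↦ by rw [mem_sphere_zero_iff_norm.1 hx]), setIntegral_const,
      padicHaar_sphere_inv_pow, smul_eq_mul, Real.rpow_add hq0, Real.rpow_one, mul_pow,
      Real.rpow_pow_comm hq0.le]
    ring
  have hint : IntegrableOn (fun x : ℤ_[p] ↦ ‖x‖ ^ t)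
      (⋃ n : ℕ, sphere 0 ((p : ℝ)⁻¹ ^ (n + 1))) (padicHaar p) :=
    ((continuous_norm.rpow_const fun _ ↦ Or.inr ht).integrable_of_hasCompactSupport
      (HasCompactSupport.of_compactSpace _)).integrableOn
  have hdisj : Pairwise (Function.onFun Disjoint
      fun n : ℕ ↦ sphere (0 : ℤ_[p]) ((p : ℝ)⁻¹ ^ (n + 1))) :=
    fun m n hmn ↦ Set.disjoint_left.2 fun x hm hn ↦ hmn <| by
      simpa using pow_right_injective₀ hq0 hq1.ne
        ((mem_sphere_zero_iff_norm.1 hm).symm.trans (mem_sphere_zero_iff_norm.1 hn))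
  rw [← setIntegral_congr_set (sdiff_null_ae_eq_self (padicHaar_singleton_zero p)),
    ← iUnion_sphere_inv_pow_succ,
    integral_iUnion (fun _ ↦ isClosed_sphere.measurableSet) hdisj hint,
    tsum_congr hterm, tsum_mul_left]
  simp_rw [pow_succ']
  rw [tsum_mul_left, tsum_geometric_of_lt_one (by positivity) hr1, hr]
  ring

theorem setIntegral_padicHaar5_norm_snd_le_norm_fst (t : ℝ) (ht : 0 ≤ t) :
    ∫ z in {z : ℤ_[p] × ℤ_[p] × ℤ_[p] × ℤ_[p] × ℤ_[p] | ‖z.1‖ < 1 ∧ ‖z.2‖ ≤ ‖z.1‖},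
        ‖z.1‖ ^ t ∂padicHaar5 p =
      ∫ x in ball (0 : ℤ_[p]) 1, ‖x‖ ^ (t + 4) ∂padicHaar p := by
  have hmeas : MeasurableSet
      {z : ℤ_[p] × ℤ_[p] × ℤ_[p] × ℤ_[p] × ℤ_[p] | ‖z.1‖ < 1 ∧ ‖z.2‖ ≤ ‖z.1‖} :=
    (measurableSet_lt measurable_fst.norm measurable_const).inter
      (measurableSet_le measurable_snd.norm measurable_fst.norm)
  have hcont : Continuous fun z : ℤ_[p] × ℤ_[p] × ℤ_[p] × ℤ_[p] × ℤ_[p] ↦ ‖z.1‖ ^ t :=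
    (continuous_norm.comp continuous_fst).rpow_const fun _ ↦ Or.inr ht
  rw [padicHaar5, setIntegral_prod_comp_fst (f := fun x ↦ ‖x‖ ^ t) hmeas
    (hcont.integrable_of_hasCompactSupport (.of_compactSpace _)).integrableOn,
    ← integral_indicator measurableSet_ball]
  congr 1 with x
  simp only [measureReal_preimage_mk_setOf_norm_snd_le, measureReal_prod_closedBall_zero,
    padicHaar_closedBall_norm, Set.indicator, mem_ball_zero_iff]
  split_ifs
  · rw [Real.rpow_add' (norm_nonneg _) (by positivity), Real.rpow_ofNat]
    ring
  · simp

end Padic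

/-- On the region `Ω₁ ⊆ (pℤ_p)⁵` where `|x|` attains the maximum of the five coordinate
absolute values, `∫_{Ω₁} |x|^{τ+4ρ} dμ = q^{-5-τ-4ρ}(1-q⁻¹)/(1-q^{-5-τ-4ρ})` with `q = p`. -/
theorem integral_Omega1 (p : ℕ) [Fact p.Prime] (ρ τ : ℝ) (hρ : 0 < ρ) (hτ : 0 < τ) :
    ∫ z in {z : ℤ_[p] × ℤ_[p] × ℤ_[p] × ℤ_[p] × ℤ_[p] |
        ‖z.1‖ < 1 ∧ ‖z.2.1‖ < 1 ∧ ‖z.2.2.1‖ < 1 ∧ ‖z.2.2.2.1‖ < 1 ∧ ‖z.2.2.2.2‖ < 1 ∧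
        ‖z.1‖ = max (max (max (max ‖z.1‖ ‖z.2.1‖) ‖z.2.2.1‖) ‖z.2.2.2.1‖) ‖z.2.2.2.2‖},
        ‖z.1‖ ^ (τ + 4 * ρ) ∂(padicHaar5 p) =
      (p : ℝ) ^ (-5 - τ - 4 * ρ) * (1 - (p : ℝ)⁻¹) / (1 - (p : ℝ) ^ (-5 - τ - 4 * ρ)) := by
  rw [setOf_norm_fst_eq_max_norm, setIntegral_padicHaar5_norm_snd_le_norm_fst p _ (by positivity),
    setIntegral_ball_one_norm_rpow p _ (by positivity),
    show -1 - (τ + 4 * ρ + 4) = -5 - τ - 4 * ρ by ring]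
end
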